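/- arXiv:1810.13213 — 4 statements merged into one kernel-verified Lean document; each statement's English description precedes it below -/
import Mathlib

section
/- Let G be a locally compact topological group and let ℓ₁ and ℓ₂ be symmetric length functions on G, each satisfying condition (α). Suppose that ℓ₁ is bounded on the set {g ∈ G : ℓ₂(g) ≤ 1} and that ℓ₂ is bounded on the set {g ∈ G : ℓ₁(g) ≤ 1}. Then ℓ₁ and ℓ₂ are equivalent at infinity: there exist constants C, D ≥ 0 such that ℓ₁(g) ≤ C·ℓ₂(g) + D and ℓ₂(g) ≤ C·ℓ₁(g) + D for all g ∈ G. -/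
/-!
Condition (α) for `ℓ₂` writes any `g` with `ℓ₂ g ≥ 1` as a product of at most `C · ℓ₂ g`
elements of `ℓ₂`-length at most `1`. By hypothesis each of them has `ℓ₁`-length at most some `M`,
so subadditivity of `ℓ₁` gives `ℓ₁ g ≤ C M · ℓ₂ g`; when `ℓ₂ g < 1` simply `ℓ₁ g ≤ M`.
Exchanging the roles of `ℓ₁` and `ℓ₂` gives the other inequality.
-/

/-- A function on a topological space is locally bounded if every point has a
neighbourhood on which the function is bounded. -/
def LocallyBoundedFun {G : Type*} [TopologicalSpace G] (f : G → ℝ) : Prop :=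
  ∀ x : G, ∃ s ∈ nhds x, Bornology.IsBounded (f '' s)

/-- A length function on a topological group: a locally bounded subadditive
function `ℓ : G → ℝ`. -/
def IsLengthFunction {G : Type*} [TopologicalSpace G] [Group G] (f : G → ℝ) : Prop :=
  LocallyBoundedFun f ∧ ∀ g h : G, f (g * h) ≤ f g + f h

/-- A length function is symmetric if `ℓ(e) = 0` and `ℓ(g⁻¹) = ℓ(g)`. -/
def IsSymmetricLength {G : Type*} [Group G] (f : G → ℝ) : Prop :=
  f 1 = 0 ∧ ∀ g : G, f g⁻¹ = f g

/-- Condition (α): there is a constant `C` such that every `g` with `ℓ(g) ≥ 1`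
can be connected to the identity by a chain `e = g₀, g₁, …, g_n = g` with
`ℓ(gᵢ⁻¹ g_{i+1}) ≤ 1` and `n ≤ C·ℓ(g)`. -/
def CondAlpha {G : Type*} [Group G] (f : G → ℝ) : Prop :=
  ∃ C : ℝ, ∀ g : G, 1 ≤ f g →
    ∃ (n : ℕ) (c : ℕ → G), c 0 = 1 ∧ c n = g ∧
      (∀ i < n, f ((c i)⁻¹ * c (i + 1)) ≤ 1) ∧ (n : ℝ) ≤ C * f g

section LengthFunction

variable {G : Type*} [Group G] {f : G → ℝ}

theorem IsSymmetricLength.nonneg (hsym : IsSymmetricLength f)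
    (hsub : ∀ g h : G, f (g * h) ≤ f g + f h) (g : G) : 0 ≤ f g := by
  have := hsub g g⁻¹
  rw [mul_inv_cancel, hsym.1, hsym.2] at this
  linarith

theorem le_mul_of_chain_steps_le (hsub : ∀ g h : G, f (g * h) ≤ f g + f h) (hone : f 1 = 0)
    {M : ℝ} {n : ℕ} {c : ℕ → G} (hc0 : c 0 = 1)
    (hstep : ∀ i < n, f ((c i)⁻¹ * c (i + 1)) ≤ M) : f (c n) ≤ n * M := by
  induction n with
  | zero => simp [hc0, hone]
  | succ n ih =>
    calc f (c (n + 1)) = f (c n * ((c n)⁻¹ * c (n + 1))) := by rw [mul_inv_cancel_left]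
      _ ≤ f (c n) + f ((c n)⁻¹ * c (n + 1)) := hsub _ _
      _ ≤ n * M + M := add_le_add (ih fun i hi => hstep i (by omega)) (hstep n n.lt_succ_self)
      _ = (n + 1 : ℕ) * M := by push_cast; ring

theorem exists_le_mul_add_of_condAlpha {ℓ₁ ℓ₂ : G → ℝ}
    (hsub₁ : ∀ g h : G, ℓ₁ (g * h) ≤ ℓ₁ g + ℓ₁ h) (hone₁ : ℓ₁ 1 = 0)
    (hnonneg₂ : ∀ g, 0 ≤ ℓ₂ g) (hα₂ : CondAlpha ℓ₂) (hbdd : BddAbove (ℓ₁ '' {g | ℓ₂ g ≤ 1})) :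
    ∃ C D : ℝ, 0 ≤ C ∧ 0 ≤ D ∧ ∀ g, ℓ₁ g ≤ C * ℓ₂ g + D := by
  obtain ⟨K, hK⟩ := hα₂
  obtain ⟨M, hM⟩ := hbdd
  have hM' : ∀ g, ℓ₂ g ≤ 1 → ℓ₁ g ≤ max M 0 := fun g hg =>
    (hM ⟨g, hg, rfl⟩).trans (le_max_left _ _)
  refine ⟨max (K * max M 0) 0, max M 0, le_max_right _ _, le_max_right _ _, fun g => ?_⟩
  have hC : 0 ≤ max (K * max M 0) 0 * ℓ₂ g := mul_nonneg (le_max_right _ _) (hnonneg₂ g)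
  rcases le_or_gt 1 (ℓ₂ g) with hg | hg
  · obtain ⟨n, c, hc0, rfl, hstep, hn⟩ := hK _ hg
    calc ℓ₁ (c n) ≤ n * max M 0 :=
          le_mul_of_chain_steps_le hsub₁ hone₁ hc0 fun i hi => hM' _ (hstep i hi)
      _ ≤ K * ℓ₂ (c n) * max M 0 := by gcongr
      _ = K * max M 0 * ℓ₂ (c n) := by ring
      _ ≤ max (K * max M 0) 0 * ℓ₂ (c n) := by gcongr; exact le_max_left _ _
      _ ≤ _ := le_add_of_nonneg_right (le_max_right _ _)
  · linarith [hM' g hg.le]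

end LengthFunction

theorem stmt2_general
    (G : Type*) [Group G] [TopologicalSpace G]
    (ℓ₁ ℓ₂ : G → ℝ)
    (h₁len : IsLengthFunction ℓ₁) (h₂len : IsLengthFunction ℓ₂)
    (h₁sym : IsSymmetricLength ℓ₁) (h₂sym : IsSymmetricLength ℓ₂)
    (h₁α : CondAlpha ℓ₁) (h₂α : CondAlpha ℓ₂)
    (h₁bdd : Bornology.IsBounded (ℓ₁ '' {g : G | ℓ₂ g ≤ 1}))
    (h₂bdd : Bornology.IsBounded (ℓ₂ '' {g : G | ℓ₁ g ≤ 1})) :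
    ∃ C D : ℝ, 0 ≤ C ∧ 0 ≤ D ∧
      ∀ g : G, ℓ₁ g ≤ C * ℓ₂ g + D ∧ ℓ₂ g ≤ C * ℓ₁ g + D := by
  have h₁nonneg := h₁sym.nonneg h₁len.2
  have h₂nonneg := h₂sym.nonneg h₂len.2
  obtain ⟨C₁, D₁, hC₁, hD₁, h₁⟩ :=
    exists_le_mul_add_of_condAlpha h₁len.2 h₁sym.1 h₂nonneg h₂α h₁bdd.bddAbove
  obtain ⟨C₂, D₂, hC₂, hD₂, h₂⟩ :=
    exists_le_mul_add_of_condAlpha h₂len.2 h₂sym.1 h₁nonneg h₁α h₂bdd.bddAbove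
  refine ⟨max C₁ C₂, max D₁ D₂, le_max_of_le_left hC₁, le_max_of_le_left hD₁, fun g => ⟨?_, ?_⟩⟩
  · calc ℓ₁ g ≤ C₁ * ℓ₂ g + D₁ := h₁ g
      _ ≤ max C₁ C₂ * ℓ₂ g + max D₁ D₂ := by
        gcongr; exacts [h₂nonneg g, le_max_left _ _, le_max_left _ _]
  · calc ℓ₂ g ≤ C₂ * ℓ₁ g + D₂ := h₂ g
      _ ≤ max C₁ C₂ * ℓ₁ g + max D₁ D₂ := by
        gcongr; exacts [h₁nonneg g, le_max_right _ _, le_max_right _ _]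

/-- Proposition on equivalence of symmetric length functions.
Let `G` be a locally compact topological group and `ℓ₁`, `ℓ₂` symmetric length
functions on `G` satisfying condition (α).  If `ℓ₁` is bounded on
`{g | ℓ₂ g ≤ 1}` and `ℓ₂` is bounded on `{g | ℓ₁ g ≤ 1}`, then `ℓ₁` and `ℓ₂`
are equivalent at infinity. -/
theorem stmt2
    (G : Type*) [Group G] [TopologicalSpace G] [IsTopologicalGroup G]
    [LocallyCompactSpace G]
    (ℓ₁ ℓ₂ : G → ℝ)
    (h₁len : IsLengthFunction ℓ₁) (h₂len : IsLengthFunction ℓ₂)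
    (h₁sym : IsSymmetricLength ℓ₁) (h₂sym : IsSymmetricLength ℓ₂)
    (h₁α : CondAlpha ℓ₁) (h₂α : CondAlpha ℓ₂)
    (h₁bdd : Bornology.IsBounded (ℓ₁ '' {g : G | ℓ₂ g ≤ 1}))
    (h₂bdd : Bornology.IsBounded (ℓ₂ '' {g : G | ℓ₁ g ≤ 1})) :
    ∃ C D : ℝ, 0 ≤ C ∧ 0 ≤ D ∧
      ∀ g : G, ℓ₁ g ≤ C * ℓ₂ g + D ∧ ℓ₂ g ≤ C * ℓ₁ g + D :=
  stmt2_general G ℓ₁ ℓ₂ h₁len h₂len h₁sym h₂sym h₁α h₂α h₁bdd h₂bdd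
end

section
/- Let g be a nilpotent real Lie algebra with lower central series g = g₁ ⊇ g₂ ⊇ ⋯ ⊇ g_k, g_{k+1} = 0, and fix subspaces v₁, …, v_k with v_i ⊕ g_{i+1} = g_i for each i. Define subspaces v^{(1)} := v₁ and v^{(j)} := span{[x, y] : x ∈ v₁, y ∈ v^{(j−1)}} for j > 1. Then for every j = 1, …, k one has g_j = v^{(j)} + v^{(j+1)} + ⋯ + v^{(k)} (a sum of subspaces). -/
/-- The linear span of all brackets `⁅x, y⁆` with `x ∈ V`, `y ∈ W`. -/
noncomputable def bracketSpan {g : Type*} [LieRing g] [LieAlgebra ℝ g]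
    (V W : Submodule ℝ g) : Submodule ℝ g :=
  Submodule.span ℝ {z : g | ∃ x ∈ V, ∃ y ∈ W, z = ⁅x, y⁆}

/-- The subspaces `v^{(j)}`: `v^{(1)} = v₁` and `v^{(j)} = [v₁, v^{(j-1)}]`
(span of brackets) for `j > 1`; here `vIter v₁ (j - 1) = v^{(j)}`. -/
noncomputable def vIter {g : Type*} [LieRing g] [LieAlgebra ℝ g]
    (v₁ : Submodule ℝ g) : ℕ → Submodule ℝ g
  | 0 => v₁
  | j + 1 => bracketSpan v₁ (vIter v₁ j)

/-!
Because `v₁` complements `g₂`, every element of `g` is `x₁ + x₂` with `x₁ ∈ v₁`, `x₂ ∈ g₂`, and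
`[g₂, gⱼ] ⊆ g_{j+2}`. Hence `g_{j+1} = [g, gⱼ] = [v₁, gⱼ] + g_{j+2}`, which by induction gives
`gⱼ = v^{(j)} + g_{j+1}`; telescoping down to `g_{k+1} = 0` gives the claim.
-/

open Finset

section LowerCentralSeries

variable {R L : Type*} [CommRing R] [LieRing L] [LieAlgebra R L]

local notation "lcs" => LieModule.lowerCentralSeries R L L

theorem lie_mem_lowerCentralSeries_add {a b : ℕ} {x y : L} (hx : x ∈ lcs a) (hy : y ∈ lcs b) :
    ⁅x, y⁆ ∈ lcs (a + b + 1) := by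
  induction a generalizing b x y with
  | zero =>
    rw [zero_add, LieModule.lowerCentralSeries_succ]
    exact LieSubmodule.lie_mem_lie (LieSubmodule.mem_top x) hy
  | succ a ih =>
    replace hx : x ∈ (lcs (a + 1)).toSubmodule := hx
    rw [LieModule.lowerCentralSeries_succ, LieSubmodule.lieIdeal_oper_eq_linear_span'] at hx
    induction hx using Submodule.span_induction with
    | mem z hz =>
      obtain ⟨u, -, n, hn, rfl⟩ := hz
      have hun : ⁅u, ⁅n, y⁆⁆ ∈ lcs (a + b + 1 + 1) := by
        rw [LieModule.lowerCentralSeries_succ]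
        exact LieSubmodule.lie_mem_lie (LieSubmodule.mem_top u) (ih hn hy)
      have hnu : ⁅n, ⁅u, y⁆⁆ ∈ lcs (a + (b + 1) + 1) := by
        refine ih hn ?_
        rw [LieModule.lowerCentralSeries_succ]
        exact LieSubmodule.lie_mem_lie (LieSubmodule.mem_top u) hy
      rw [lie_lie]
      exact sub_mem (by convert hun using 2; omega) (by convert hnu using 2; omega)
    | zero => simp
    | add z w _ _ hz hw => rw [add_lie]; exact add_mem hz hw
    | smul c z _ hz => rw [smul_lie]; exact Submodule.smul_mem _ c hz

end LowerCentralSeries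

theorem eq_sum_Ico_of_eq_add_succ {M : Type*} [AddCommMonoid M] {f w : ℕ → M} {k : ℕ}
    (hstep : ∀ n < k, f n = w n + f (n + 1)) (hk : f k = 0) {j : ℕ} (hj : j ≤ k) :
    f j = ∑ i ∈ Ico j k, w i := by
  induction hj using Nat.decreasingInduction with
  | self => simp [hk]
  | of_succ n hn ih => rw [sum_eq_sum_Ico_succ_bot hn, ← ih, ← hstep n hn]

section ComplementSeries

variable {g : Type*} [LieRing g] [LieAlgebra ℝ g]

local notation "lcs" => LieModule.lowerCentralSeries ℝ g g

theorem vIter_le_lowerCentralSeries (v₁ : Submodule ℝ g) (n : ℕ) :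
    vIter v₁ n ≤ (lcs n).toSubmodule := by
  induction n with
  | zero => simp [vIter]
  | succ n ih =>
    rw [vIter, bracketSpan, Submodule.span_le]
    rintro z ⟨x, -, y, hy, rfl⟩
    rw [SetLike.mem_coe, LieSubmodule.mem_toSubmodule, LieModule.lowerCentralSeries_succ]
    exact LieSubmodule.lie_mem_lie (LieSubmodule.mem_top x) (ih hy)

theorem lowerCentralSeries_eq_vIter_sup {v₁ : Submodule ℝ g}
    (hv₁ : v₁ ⊔ (lcs 1).toSubmodule = ⊤) (n : ℕ) :
    (lcs n).toSubmodule = vIter v₁ n ⊔ (lcs (n + 1)).toSubmodule := by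
  induction n with
  | zero => rw [vIter, LieModule.lowerCentralSeries_zero, LieSubmodule.top_toSubmodule, hv₁]
  | succ n ih =>
    refine le_antisymm ?_ (sup_le (vIter_le_lowerCentralSeries v₁ (n + 1))
      (LieModule.antitone_lowerCentralSeries ℝ g g (n + 1).le_succ))
    conv_lhs => rw [LieModule.lowerCentralSeries_succ, LieSubmodule.lieIdeal_oper_eq_linear_span']
    rw [Submodule.span_le]
    rintro z ⟨x, -, y, hy, rfl⟩
    obtain ⟨x₁, hx₁, x₂, hx₂, rfl⟩ := Submodule.mem_sup.mp (hv₁ ▸ Submodule.mem_top : x ∈ _)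
    obtain ⟨y₁, hy₁, y₂, hy₂, rfl⟩ := Submodule.mem_sup.mp (by rwa [← ih])
    have hbracket : ⁅x₁, y₁⁆ ∈ vIter v₁ (n + 1) := Submodule.subset_span ⟨x₁, hx₁, y₁, hy₁, rfl⟩
    have hx₁y₂ : ⁅x₁, y₂⁆ ∈ lcs (n + 1 + 1) := by
      rw [LieModule.lowerCentralSeries_succ]
      exact LieSubmodule.lie_mem_lie (LieSubmodule.mem_top x₁) hy₂
    have hx₂y : ⁅x₂, y₁ + y₂⁆ ∈ lcs (n + 1 + 1) := by
      convert lie_mem_lowerCentralSeries_add hx₂ hy using 2; omega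
    rw [SetLike.mem_coe, add_lie, lie_add]
    exact add_mem (add_mem (Submodule.mem_sup_left hbracket) (Submodule.mem_sup_right hx₁y₂))
      (Submodule.mem_sup_right hx₂y)

end ComplementSeries

theorem stmt9_general
    (g : Type*) [LieRing g] [LieAlgebra ℝ g]
    (k : ℕ)
    (hnilp : LieModule.lowerCentralSeries ℝ g g k = ⊥)
    (v : ℕ → Submodule ℝ g)
    (hsup : ∀ i, 1 ≤ i → i ≤ k →
      v i ⊔ (LieModule.lowerCentralSeries ℝ g g i : Submodule ℝ g)
        = (LieModule.lowerCentralSeries ℝ g g (i - 1) : Submodule ℝ g)) :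
    ∀ j, 1 ≤ j → j ≤ k →
      (LieModule.lowerCentralSeries ℝ g g (j - 1) : Submodule ℝ g)
        = ∑ i ∈ Finset.Icc j k, vIter (v 1) (i - 1) := by
  intro j hj hjk
  have hv₁ : v 1 ⊔ (LieModule.lowerCentralSeries ℝ g g 1).toSubmodule = ⊤ := by
    simpa using hsup 1 le_rfl (hj.trans hjk)
  obtain ⟨j, rfl⟩ : ∃ j', j = j' + 1 := ⟨j - 1, by omega⟩
  rw [Nat.add_sub_cancel, ← Ico_add_one_right_eq_Icc, ← sum_Ico_add']
  simp only [Nat.add_sub_cancel]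
  exact eq_sum_Ico_of_eq_add_succ (fun n _ ↦ lowerCentralSeries_eq_vIter_sup hv₁ n)
    (by simp [hnilp]) (by omega)

/-- Let `g` be a nilpotent real Lie algebra with lower central
series `g = g₁ ⊇ ⋯ ⊇ g_k`, `g_{k+1} = 0` (in Mathlib's indexing
`gⱼ = LieModule.lowerCentralSeries ℝ g g (j-1)`), and subspaces `vᵢ` with
`vᵢ ⊕ g_{i+1} = gᵢ`.  With `v^{(1)} := v₁`, `v^{(j)} := [v₁, v^{(j-1)}]`, one
has `gⱼ = v^{(j)} + v^{(j+1)} + ⋯ + v^{(k)}` for every `j = 1, …, k`. -/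
theorem stmt9
    (g : Type*) [LieRing g] [LieAlgebra ℝ g]
    (k : ℕ) (hk : 1 ≤ k)
    (hnilp : LieModule.lowerCentralSeries ℝ g g k = ⊥)
    (v : ℕ → Submodule ℝ g)
    (hdisj : ∀ i, 1 ≤ i → i ≤ k →
      v i ⊓ (LieModule.lowerCentralSeries ℝ g g i : Submodule ℝ g) = ⊥)
    (hsup : ∀ i, 1 ≤ i → i ≤ k →
      v i ⊔ (LieModule.lowerCentralSeries ℝ g g i : Submodule ℝ g)
        = (LieModule.lowerCentralSeries ℝ g g (i - 1) : Submodule ℝ g)) :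
    ∀ j, 1 ≤ j → j ≤ k →
      (LieModule.lowerCentralSeries ℝ g g (j - 1) : Submodule ℝ g)
        = ∑ i ∈ Finset.Icc j k, vIter (v 1) (i - 1) :=
  stmt9_general g k hnilp v hsup
end

section
/- Fix positive integers w₁, …, w_m, and for a multi-index α ∈ ℤ₊^m set w(α) := Σ_{i=1}^m w_i·α_i. For s ≥ 0 define Φ(s) := Σ_{α ∈ ℤ₊^m} (s/w(α))^{w(α)}, with the term at α = 0 equal to 1 (this series converges for every s ≥ 0). Then there exist positive constants c, a, C, A such that c·e^{a·s} ≤ Φ(s) ≤ C·e^{A·s} for all s ≥ 0. -/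
/-- The weight `w(α) = Σᵢ wᵢ·αᵢ` of a multi-index `α ∈ ℤ₊^m`. -/
def wtSum {m : ℕ} (w : Fin m → ℕ) (α : Fin m → ℕ) : ℕ :=
  ∑ i, w i * α i

/-- The weight sequence `M_α := w(α)^{-w(α)}` (`M₀ := 1`). -/
noncomputable def Mwt {m : ℕ} (w : Fin m → ℕ) (α : Fin m → ℕ) : ℝ :=
  if α = 0 then 1 else ((wtSum w α : ℝ)) ^ (-(wtSum w α : ℝ))

/-- The growth function `Φ(s) = Σ_α (s/w(α))^{w(α)} = Σ_α M_α · s^{w(α)}`,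
with the term at `α = 0` equal to `1`. -/
noncomputable def PhiGrowth {m : ℕ} (w : Fin m → ℕ) (s : ℝ) : ℝ :=
  ∑' α : Fin m → ℕ, Mwt w α * s ^ (wtSum w α)

/-!
Write `n = w(α)`. Since `n! ≤ nⁿ`, each term satisfies `(s/n)ⁿ ≤ (2s)ⁿ/n! · 2⁻ⁿ ≤ e^{2s} 2⁻ⁿ`,
and `2⁻ⁿ ≤ ∏ᵢ 2^{-αᵢ}` is summable over `ℤ₊^m`, giving the upper bound. For the lower bound,
take `α = k·eᵢ` with `k = ⌊s/(e·wᵢ)⌋`: then `e·n ≤ s`, so the single term `(s/n)ⁿ` is at least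
`eⁿ ≥ e^{s/e - wᵢ}`.
-/

open Finset Real

lemma summable_pi_prod_of_nonneg {β : Type*} {f : β → ℝ} (hf₀ : ∀ b, 0 ≤ f b)
    (hf : Summable f) : ∀ m : ℕ, Summable fun α : Fin m → β => ∏ i, f (α i)
  | 0 => .of_finite
  | m + 1 => by
    rw [← (Fin.consEquiv fun _ => β).summable_iff]
    simpa [Function.comp_def, Fin.consEquiv, Fin.prod_univ_succ] using
      hf.mul_of_nonneg (summable_pi_prod_of_nonneg hf₀ hf m) hf₀
        fun α => prod_nonneg fun i _ => hf₀ (α i)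

lemma div_natCast_pow_self_le_exp {x : ℝ} (hx : 0 ≤ x) (n : ℕ) : (x / n) ^ n ≤ exp x :=
  calc (x / n) ^ n = x ^ n / (n : ℝ) ^ n := div_pow x n n
    _ ≤ x ^ n / n.factorial :=
      div_le_div_of_nonneg_left (pow_nonneg hx n) (by positivity)
        (by exact_mod_cast n.factorial_le_pow)
    _ ≤ exp x := pow_div_factorial_le_exp x hx n

lemma exp_le_div_natCast_pow_self {s : ℝ} {n : ℕ} (h : exp 1 * n ≤ s) :
    exp n ≤ (s / n) ^ n := by
  rcases n.eq_zero_or_pos with rfl | hn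
  · simp
  · rw [← exp_one_pow]
    gcongr
    rwa [le_div_iff₀ (by positivity)]

section Weights

variable {m : ℕ} {w : Fin m → ℕ}

lemma Mwt_eq (w α : Fin m → ℕ) : Mwt w α = ((wtSum w α : ℝ) ^ wtSum w α)⁻¹ := by
  rw [Mwt]
  split_ifs with hα
  · simp [hα, wtSum]
  · rw [rpow_neg (Nat.cast_nonneg _), rpow_natCast]

lemma Mwt_mul_pow (w α : Fin m → ℕ) (s : ℝ) :
    Mwt w α * s ^ wtSum w α = (s / wtSum w α) ^ wtSum w α := by
  rw [Mwt_eq, div_pow, inv_mul_eq_div]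

lemma wtSum_single (w : Fin m → ℕ) (i : Fin m) (k : ℕ) : wtSum w (Pi.single i k) = w i * k := by
  simp [wtSum, Pi.single_apply]

lemma sum_le_wtSum (hw : ∀ i, 1 ≤ w i) (α : Fin m → ℕ) : ∑ i, α i ≤ wtSum w α :=
  sum_le_sum fun i _ => Nat.le_mul_of_pos_left (α i) (hw i)

lemma Mwt_mul_pow_le (hw : ∀ i, 1 ≤ w i) {s : ℝ} (hs : 0 ≤ s) (α : Fin m → ℕ) :
    Mwt w α * s ^ wtSum w α ≤ exp (2 * s) * ∏ i, (2⁻¹ : ℝ) ^ α i := by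
  rw [Mwt_mul_pow, prod_pow_eq_pow_sum]
  set n := wtSum w α
  calc (s / n) ^ n = (2 * s / n) ^ n * 2⁻¹ ^ n := by rw [← mul_pow]; ring
    _ ≤ exp (2 * s) * 2⁻¹ ^ ∑ i, α i := by
      gcongr ?_ * ?_
      · exact div_natCast_pow_self_le_exp (by positivity) n
      · exact pow_le_pow_of_le_one (by norm_num) (by norm_num) (sum_le_wtSum hw α)

lemma summable_prod_inv_two_pow (m : ℕ) :
    Summable fun α : Fin m → ℕ => ∏ i, (2⁻¹ : ℝ) ^ α i :=
  summable_pi_prod_of_nonneg (fun _ => by positivity)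
    (summable_geometric_of_lt_one (by norm_num) (by norm_num)) m

lemma summable_Mwt_mul_pow (hw : ∀ i, 1 ≤ w i) {s : ℝ} (hs : 0 ≤ s) :
    Summable fun α : Fin m → ℕ => Mwt w α * s ^ wtSum w α :=
  .of_nonneg_of_le (fun α => by rw [Mwt_mul_pow]; positivity) (Mwt_mul_pow_le hw hs)
    ((summable_prod_inv_two_pow m).mul_left _)

lemma PhiGrowth_le (hw : ∀ i, 1 ≤ w i) {s : ℝ} (hs : 0 ≤ s) :
    PhiGrowth w s ≤ (∑' α : Fin m → ℕ, ∏ i, (2⁻¹ : ℝ) ^ α i) * exp (2 * s) := by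
  rw [mul_comm, ← tsum_mul_left]
  exact (summable_Mwt_mul_pow hw hs).tsum_le_tsum (Mwt_mul_pow_le hw hs)
    ((summable_prod_inv_two_pow m).mul_left _)

lemma exp_le_PhiGrowth (hw : ∀ i, 1 ≤ w i) (i : Fin m) {s : ℝ} (hs : 0 ≤ s) :
    exp (s / exp 1 - w i) ≤ PhiGrowth w s := by
  set k := ⌊s / (exp 1 * w i)⌋₊
  have hwi : (0 : ℝ) < exp 1 * w i := by have := hw i; positivity
  have hk_le : exp 1 * (w i * k : ℕ) ≤ s := by
    have := Nat.floor_le (div_nonneg hs hwi.le)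
    rw [le_div_iff₀ hwi] at this
    push_cast; linarith
  have hk_lt : s / exp 1 - w i ≤ (w i * k : ℕ) := by
    have := Nat.lt_floor_add_one (s / (exp 1 * w i))
    rw [div_lt_iff₀ hwi] at this
    rw [sub_le_iff_le_add, div_le_iff₀ (exp_pos 1)]
    push_cast; nlinarith
  calc exp (s / exp 1 - w i) ≤ exp (w i * k : ℕ) := exp_le_exp.mpr hk_lt
    _ ≤ Mwt w (Pi.single i k) * s ^ wtSum w (Pi.single i k) := by
      rw [Mwt_mul_pow, wtSum_single]
      exact exp_le_div_natCast_pow_self hk_le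
    _ ≤ PhiGrowth w s :=
      (summable_Mwt_mul_pow hw hs).le_tsum _ fun α _ => by rw [Mwt_mul_pow]; positivity

end Weights

/-- For positive integers `w₁, …, w_m` (with `m ≥ 1`), the
growth function `Φ` associated with the weight sequence `M_α = w(α)^{-w(α)}`
satisfies `c·e^{a·s} ≤ Φ(s) ≤ C·e^{A·s}` for all `s ≥ 0`, for suitable positive
constants `c, a, C, A`. -/
theorem stmt12
    (m : ℕ) (hm : 1 ≤ m) (w : Fin m → ℕ) (hw : ∀ i, 1 ≤ w i) :
    ∃ c a C A : ℝ, 0 < c ∧ 0 < a ∧ 0 < C ∧ 0 < A ∧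
      ∀ s : ℝ, 0 ≤ s →
        c * Real.exp (a * s) ≤ PhiGrowth w s ∧
        PhiGrowth w s ≤ C * Real.exp (A * s) := by
  have hC : 1 ≤ ∑' α : Fin m → ℕ, ∏ i, (2⁻¹ : ℝ) ^ α i := by
    simpa using (summable_prod_inv_two_pow m).le_tsum 0 fun _ _ => by positivity
  refine ⟨exp (-w ⟨0, hm⟩), (exp 1)⁻¹, _, 2, exp_pos _, inv_pos.mpr (exp_pos 1),
    by linarith, two_pos, fun s hs => ⟨?_, PhiGrowth_le hw hs⟩⟩
  rw [← exp_add]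
  convert exp_le_PhiGrowth hw ⟨0, hm⟩ hs using 2
  ring
end

section
/- Let w₁, …, w_s and p be positive integers with p ≥ w₁ + ⋯ + w_s, and let t₁, …, t_s be complex numbers. Then |t₁·t₂⋯t_s|^{1/p} ≤ Σ_{i=1}^s |t_i|^{1/w_i} + 1. -/
/-!
Let `S` be the right-hand side. Then `S ≥ 1` and `‖tᵢ‖ ^ (1 / wᵢ) ≤ S`, so `‖tᵢ‖ ≤ S ^ wᵢ`
and `‖∏ tᵢ‖ ≤ S ^ (∑ wᵢ) ≤ S ^ p`; taking `p`-th roots gives the claim.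
-/

lemma le_pow_of_rpow_one_div_le {x y : ℝ} {n : ℕ} (hx : 0 ≤ x) (hy : 0 ≤ y) (hn : n ≠ 0)
    (h : x ^ ((1 : ℝ) / n) ≤ y) : x ≤ y ^ n := by
  rw [one_div, Real.rpow_inv_le_iff_of_pos hx hy (by positivity)] at h
  exact_mod_cast h

-- For `n = 0` the exponent `1 / n` is `0` in `ℝ`, so the left side is `1`.
lemma rpow_one_div_le_of_le_pow {x y : ℝ} {n : ℕ} (hx : 0 ≤ x) (hy : 1 ≤ y) (h : x ≤ y ^ n) :
    x ^ ((1 : ℝ) / n) ≤ y := by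
  rcases eq_or_ne n 0 with rfl | hn
  · simpa using hy
  · rw [one_div, Real.rpow_inv_le_iff_of_pos hx (by linarith) (by positivity)]
    exact_mod_cast h

theorem stmt14_general
    (s : ℕ) (w : Fin s → ℕ) (hw : ∀ i, 1 ≤ w i)
    (p : ℕ) (hp : (∑ i, w i) ≤ p)
    (t : Fin s → ℂ) :
    ‖∏ i, t i‖ ^ ((1 : ℝ) / p) ≤ (∑ i, ‖t i‖ ^ ((1 : ℝ) / (w i))) + 1 := by
  set S : ℝ := (∑ i, ‖t i‖ ^ ((1 : ℝ) / (w i))) + 1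
  have hterm_nonneg : ∀ i ∈ Finset.univ, 0 ≤ ‖t i‖ ^ ((1 : ℝ) / (w i)) :=
    fun i _ => Real.rpow_nonneg (norm_nonneg _) _
  have hS : 1 ≤ S := le_add_of_nonneg_left (Finset.sum_nonneg hterm_nonneg)
  have hterm_le : ∀ i, ‖t i‖ ^ ((1 : ℝ) / (w i)) ≤ S := fun i =>
    (Finset.single_le_sum hterm_nonneg (Finset.mem_univ i)).trans
      (le_add_of_nonneg_right zero_le_one)
  have hnorm_le : ∀ i, ‖t i‖ ≤ S ^ w i := fun i =>
    le_pow_of_rpow_one_div_le (norm_nonneg _) (by linarith) (by have := hw i; omega) (hterm_le i)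
  refine rpow_one_div_le_of_le_pow (norm_nonneg _) hS ?_
  calc ‖∏ i, t i‖ = ∏ i, ‖t i‖ := norm_prod _ _
    _ ≤ ∏ i, S ^ w i := Finset.prod_le_prod (fun i _ => norm_nonneg _) (fun i _ => hnorm_le i)
    _ = S ^ ∑ i, w i := Finset.prod_pow_eq_pow_sum _ _ _
    _ ≤ S ^ p := pow_le_pow_right₀ hS hp

/-- Let `w₁, …, w_s` and `p` be positive integers with
`p ≥ w₁ + ⋯ + w_s`, and let `t₁, …, t_s` be complex numbers.  Then
`|t₁·t₂⋯t_s|^{1/p} ≤ Σᵢ |tᵢ|^{1/wᵢ} + 1`. -/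
theorem stmt14
    (s : ℕ) (w : Fin s → ℕ) (hw : ∀ i, 1 ≤ w i)
    (p : ℕ) (hp1 : 1 ≤ p) (hp : (∑ i, w i) ≤ p)
    (t : Fin s → ℂ) :
    ‖∏ i, t i‖ ^ ((1 : ℝ) / p) ≤ (∑ i, ‖t i‖ ^ ((1 : ℝ) / (w i))) + 1 :=
  stmt14_general s w hw p hp t
end
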